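/- Let X be a pointed metric space, Y a real Banach space, 1 < p < ∞ with conjugate exponent p*, and T : X → Y a Lipschitz map with T(0) = 0. Then T is Lipschitz-Cohen strongly p-summing if and only if the bounded linear operator T^# : Y* → X^# defined by T^#(y*) = y* ∘ T is p*-summing. -/

import Mathlib

open scoped BigOperators NNReal

noncomputable section

/-- The (least) Lipschitz constant, i.e. the norm in `X^#`. -/
def lipConst {α : Type*} {β : Type*} [PseudoMetricSpace α] [PseudoMetricSpace β]
    (g : α → β) : ℝ≥0 :=
  sInf {K : ℝ≥0 | LipschitzWith K g}

/-- `sup_{g ∈ B_{Y*}} (Σ_i |g(y_i)|^q)^{1/q}`. -/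
def dualBallSup {Y : Type*} [NormedAddCommGroup Y] [NormedSpace ℝ Y]
    (q : ℝ) {n : ℕ} (y : Fin n → Y) : ℝ :=
  ⨆ g : {g : Y →L[ℝ] ℝ // ‖g‖ ≤ 1}, (∑ i, |g.1 (y i)| ^ q) ^ (1 / q)

/-- `T` is Lipschitz-Cohen strongly `p`-summing with constant `C` (`q = p*`). -/
def LipCohenCond {X : Type*} [MetricSpace X] {Y : Type*} [NormedAddCommGroup Y]
    [NormedSpace ℝ Y] (p q : ℝ) (T : X → Y) (C : ℝ) : Prop :=
  ∀ (n : ℕ) (x x' : Fin n → X) (ys : Fin n → (Y →L[ℝ] ℝ)) (lam : Fin n → ℝ),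
    (∀ i, 0 < lam i) →
    ∑ i, lam i * |ys i (T (x i)) - ys i (T (x' i))| ≤
      C * (∑ i, lam i ^ p * dist (x i) (x' i) ^ p) ^ (1 / p) * dualBallSup q ys

/-- The operator `T^# : Y* → X^#`, `y* ↦ y* ∘ T`, is `q`-summing with constant `C`:
`(Σ_i ‖y_i* ∘ T‖_{X^#}^q)^{1/q} ≤ C · sup_{y** ∈ B_{Y**}} (Σ_i |y**(y_i*)|^q)^{1/q}`,
where the norm of `y* ∘ T` in `X^#` is its Lipschitz constant. -/
def SharpPSummingCond {X : Type*} [MetricSpace X] {Y : Type*} [NormedAddCommGroup Y]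
    [NormedSpace ℝ Y] (q : ℝ) (T : X → Y) (C : ℝ) : Prop :=
  ∀ (n : ℕ) (ys : Fin n → (Y →L[ℝ] ℝ)),
    (∑ i, (lipConst (fun x => ys i (T x)) : ℝ) ^ q) ^ (1 / q) ≤ C * dualBallSup q ys

/-!
`T^#` being `p*`-summing implies the Lipschitz-Cohen inequality by Hölder's inequality, applied to
`|y_i*(T x_i) - y_i*(T x_i')| ≤ Lip(y_i* ∘ T) d(x_i, x_i')`.

Conversely, for `0 < b_i < Lip(y_i* ∘ T)` there are points `u_i, v_i` with
`b_i d(u_i, v_i) < |y_i*(T u_i) - y_i*(T v_i)|`, and the weights `λ_i = b_i^{q-1} / d(u_i, v_i)`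
turn the Lipschitz-Cohen inequality into `Σ b_i^q ≤ C (Σ b_i^q)^{1/p} S`, where `S` is the
weak `q`-norm of `(y_i*)`; hence `(Σ b_i^q)^{1/q} ≤ C S`. Taking `b_i = t Lip(y_i* ∘ T)` and
letting `t → 1` gives the `p*`-summing inequality for `T^#`.
-/

section lipConst

variable {α β : Type*} [PseudoMetricSpace β] {g : α → β}

lemma lipConst_le [PseudoMetricSpace α] {K : ℝ≥0} (h : LipschitzWith K g) : lipConst g ≤ K :=
  csInf_le (OrderBot.bddBelow _) h

lemma lipschitzWith_lipConst [PseudoMetricSpace α] {K : ℝ≥0} (h : LipschitzWith K g) :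
    LipschitzWith (lipConst g) g := by
  refine LipschitzWith.of_dist_le_mul fun x y => ?_
  rcases (dist_nonneg : 0 ≤ dist x y).eq_or_lt with hxy | hxy
  · simpa [← hxy] using h.dist_le_mul x y
  · have : (⟨dist (g x) (g y) / dist x y, by positivity⟩ : ℝ≥0) ≤ lipConst g :=
      le_csInf (s := {K : ℝ≥0 | LipschitzWith K g}) ⟨K, h⟩ fun K' hK' =>
        (div_le_iff₀ hxy).2 (hK'.dist_le_mul x y)
    exact (div_le_iff₀ hxy).1 this

lemma exists_lt_dist_of_lt_lipConst [MetricSpace α] {c : ℝ≥0} (h : c < lipConst g) :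
    ∃ u v, 0 < dist u v ∧ c * dist u v < dist (g u) (g v) := by
  have hc : ¬ LipschitzWith c g := fun hc => (lipConst_le hc).not_gt h
  rw [lipschitzWith_iff_dist_le_mul] at hc
  push Not at hc
  obtain ⟨u, v, huv⟩ := hc
  refine ⟨u, v, dist_pos.2 fun hEq => ?_, huv⟩
  subst hEq
  simp at huv

end lipConst

lemma dualBallSup_nonneg {Y : Type*} [NormedAddCommGroup Y] [NormedSpace ℝ Y]
    (q : ℝ) {n : ℕ} (y : Fin n → Y) : 0 ≤ dualBallSup q y :=
  Real.iSup_nonneg fun _ => by positivity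

lemma le_of_forall_lt_one_mul_le_of_nonneg {x y : ℝ} (hx : 0 ≤ x)
    (h : ∀ t, 0 ≤ t → t < 1 → t * x ≤ y) : x ≤ y := by
  have hy : 0 ≤ y := by simpa using h 0 le_rfl one_pos
  exact NNReal.le_of_forall_lt_one_mul_le (x := ⟨x, hx⟩) (y := ⟨y, hy⟩)
    fun t ht => h t t.2 ht

lemma rpow_one_div_le_of_le_mul_rpow {p q t M : ℝ} (hpq : p.HolderConjugate q) (ht : 0 ≤ t)
    (hM : 0 ≤ M) (h : t ≤ M * t ^ (1 / p)) : t ^ (1 / q) ≤ M := by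
  rcases ht.eq_or_lt with rfl | ht
  · rwa [Real.zero_rpow hpq.symm.one_div_ne_zero]
  · have hsplit : t ^ (1 / q) * t ^ (1 / p) = t := by
      rw [← Real.rpow_add ht, add_comm, hpq.one_div_add_one_div, div_one, Real.rpow_one]
    exact le_of_mul_le_mul_right (hsplit.trans_le h) (Real.rpow_pos_of_pos ht _)

lemma rpow_one_div_sum_mul_rpow {ι : Type*} (s : Finset ι) {q t : ℝ} (hq : q ≠ 0)
    (ht : 0 ≤ t) {f : ι → ℝ} (hf : ∀ i, 0 ≤ f i) :
    (∑ i ∈ s, (t * f i) ^ q) ^ (1 / q) = t * (∑ i ∈ s, f i ^ q) ^ (1 / q) := by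
  simp_rw [Real.mul_rpow ht (hf _)]
  rw [← Finset.mul_sum, Real.mul_rpow (by positivity)
      (Finset.sum_nonneg fun i _ => Real.rpow_nonneg (hf i) _), ← Real.rpow_mul ht,
    mul_one_div_cancel hq, Real.rpow_one]

section summing

variable {X : Type*} [MetricSpace X] {Y : Type*} [NormedAddCommGroup Y] [NormedSpace ℝ Y]
  {p q : ℝ} {T : X → Y} {C : ℝ}

lemma lipCohenCond_of_sharpPSummingCond (hpq : p.HolderConjugate q) {K : ℝ≥0}
    (hT : LipschitzWith K T) (h : SharpPSummingCond q T C) : LipCohenCond p q T C := by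
  intro n x x' ys lam hlam
  set L : Fin n → ℝ := fun i => lipConst (fun z => ys i (T z))
  have hdist : ∀ i, |ys i (T (x i)) - ys i (T (x' i))| ≤ L i * dist (x i) (x' i) := fun i =>
    (lipschitzWith_lipConst ((ys i).lipschitz.comp hT)).dist_le_mul (x i) (x' i)
  calc ∑ i, lam i * |ys i (T (x i)) - ys i (T (x' i))|
      ≤ ∑ i, (lam i * dist (x i) (x' i)) * L i := Finset.sum_le_sum fun i _ => by
        rw [mul_right_comm, mul_assoc]
        exact mul_le_mul_of_nonneg_left (hdist i) (hlam i).le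
    _ ≤ (∑ i, (lam i * dist (x i) (x' i)) ^ p) ^ (1 / p) * (∑ i, L i ^ q) ^ (1 / q) :=
        Real.inner_le_Lp_mul_Lq_of_nonneg _ hpq
          (fun i _ => mul_nonneg (hlam i).le dist_nonneg) fun i _ => NNReal.coe_nonneg _
    _ ≤ (∑ i, (lam i * dist (x i) (x' i)) ^ p) ^ (1 / p) * (C * dualBallSup q ys) :=
        mul_le_mul_of_nonneg_left (h n ys) (Real.rpow_nonneg (Finset.sum_nonneg fun i _ =>
          Real.rpow_nonneg (mul_nonneg (hlam i).le dist_nonneg) _) _)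
    _ = C * (∑ i, lam i ^ p * dist (x i) (x' i) ^ p) ^ (1 / p) * dualBallSup q ys := by
        simp_rw [Real.mul_rpow (hlam _).le dist_nonneg]
        ring

lemma exists_lipCohen_witness (hpq : p.HolderConjugate q) {g : X → ℝ} {b : ℝ} (hb : 0 < b)
    (hbg : b < lipConst g) :
    ∃ u v : X, ∃ lam > 0, b ^ q ≤ lam * |g u - g v| ∧ lam ^ p * dist u v ^ p = b ^ q := by
  obtain ⟨u, v, huv, hlt⟩ := exists_lt_dist_of_lt_lipConst (c := ⟨b, hb.le⟩) hbg
  rw [Real.dist_eq] at hlt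
  refine ⟨u, v, b ^ (q - 1) / dist u v, by positivity, ?_, ?_⟩
  · calc b ^ q = b ^ (q - 1) / dist u v * (b * dist u v) := by
          rw [Real.rpow_sub hb, Real.rpow_one]
          field_simp
      _ ≤ b ^ (q - 1) / dist u v * |g u - g v| := by gcongr; exact hlt.le
  · rw [← Real.mul_rpow (by positivity) dist_nonneg, div_mul_cancel₀ _ huv.ne',
      ← Real.rpow_mul hb.le, hpq.symm.sub_one_mul_conj]

lemma sum_rpow_le_of_lipCohenCond (x0 : X) (hpq : p.HolderConjugate q) (hC : 0 ≤ C)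
    (h : LipCohenCond p q T C) {n : ℕ} (ys : Fin n → Y →L[ℝ] ℝ) (b : Fin n → ℝ)
    (hb : ∀ i, 0 ≤ b i) (hbL : ∀ i, 0 < b i → b i < lipConst (fun x => ys i (T x))) :
    (∑ i, b i ^ q) ^ (1 / q) ≤ C * dualBallSup q ys := by
  have witness : ∀ i, ∃ u v : X, ∃ lam > 0, b i ^ q ≤ lam * |ys i (T u) - ys i (T v)| ∧
      lam ^ p * dist u v ^ p ≤ b i ^ q := by
    intro i
    rcases (hb i).eq_or_lt with hbi | hbi
    · refine ⟨x0, x0, 1, one_pos, ?_, ?_⟩ <;> simp [← hbi, hpq.ne_zero, hpq.symm.ne_zero]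
    · obtain ⟨u, v, lam, hlam, hbq, hdist⟩ := exists_lipCohen_witness hpq hbi (hbL i hbi)
      exact ⟨u, v, lam, hlam, hbq, hdist.le⟩
  choose u v lam hlam hbq hdist using witness
  have hsum : 0 ≤ ∑ i, b i ^ q := Finset.sum_nonneg fun i _ => Real.rpow_nonneg (hb i) _
  refine rpow_one_div_le_of_le_mul_rpow hpq hsum
    (mul_nonneg hC (dualBallSup_nonneg q ys)) ?_
  calc ∑ i, b i ^ q ≤ ∑ i, lam i * |ys i (T (u i)) - ys i (T (v i))| :=
        Finset.sum_le_sum fun i _ => hbq i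
    _ ≤ C * (∑ i, lam i ^ p * dist (u i) (v i) ^ p) ^ (1 / p) * dualBallSup q ys :=
        h n u v ys lam hlam
    _ ≤ C * (∑ i, b i ^ q) ^ (1 / p) * dualBallSup q ys := by
        have hlhs : 0 ≤ ∑ i, lam i ^ p * dist (u i) (v i) ^ p := Finset.sum_nonneg fun i _ =>
          mul_nonneg (Real.rpow_nonneg (hlam i).le _) (Real.rpow_nonneg dist_nonneg _)
        have hpow := Real.rpow_le_rpow hlhs (Finset.sum_le_sum fun i _ => hdist i)
          hpq.one_div_nonneg
        exact mul_le_mul_of_nonneg_right (mul_le_mul_of_nonneg_left hpow hC)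
          (dualBallSup_nonneg q ys)
    _ = C * dualBallSup q ys * (∑ i, b i ^ q) ^ (1 / p) := by ring

lemma sharpPSummingCond_of_lipCohenCond (x0 : X) (hpq : p.HolderConjugate q) (hC : 0 ≤ C)
    (h : LipCohenCond p q T C) : SharpPSummingCond q T C := by
  intro n ys
  set L : Fin n → ℝ := fun i => lipConst (fun x => ys i (T x))
  have hL : ∀ i, 0 ≤ L i := fun i => NNReal.coe_nonneg _
  refine le_of_forall_lt_one_mul_le_of_nonneg (by positivity) fun t ht0 ht1 => ?_
  rw [← rpow_one_div_sum_mul_rpow _ hpq.symm.ne_zero ht0 hL]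
  exact sum_rpow_le_of_lipCohenCond x0 hpq hC h ys _ (fun i => mul_nonneg ht0 (hL i))
    fun i hi => mul_lt_of_lt_one_left (pos_of_mul_pos_right hi ht0) ht1

end summing

theorem lipCohen_iff_sharp_pSumming_general {X : Type*} [MetricSpace X] (x0 : X)
    {Y : Type*} [NormedAddCommGroup Y] [NormedSpace ℝ Y]
    (p q : ℝ) (hp : 1 < p) (hpq : 1 / p + 1 / q = 1)
    (T : X → Y) (K : ℝ≥0) (hT : LipschitzWith K T) :
    (∃ C > 0, LipCohenCond p q T C) ↔ (∃ C > 0, SharpPSummingCond q T C) := by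
  have hpq' : p.HolderConjugate q :=
    Real.holderConjugate_iff.2 ⟨hp, by simpa only [one_div] using hpq⟩
  exact ⟨fun ⟨C, hC, h⟩ => ⟨C, hC, sharpPSummingCond_of_lipCohenCond x0 hpq' hC.le h⟩,
    fun ⟨C, hC, h⟩ => ⟨C, hC, lipCohenCond_of_sharpPSummingCond hpq' hT h⟩⟩

/-- `T` is Lipschitz-Cohen strongly `p`-summing iff
`T^# : Y* → X^#` is `p*`-summing. -/
theorem lipCohen_iff_sharp_pSumming {X : Type*} [MetricSpace X] (x0 : X)
    {Y : Type*} [NormedAddCommGroup Y] [NormedSpace ℝ Y] [CompleteSpace Y]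
    (p q : ℝ) (hp : 1 < p) (hpq : 1 / p + 1 / q = 1)
    (T : X → Y) (K : ℝ≥0) (hT : LipschitzWith K T) (hT0 : T x0 = 0) :
    (∃ C > 0, LipCohenCond p q T C) ↔ (∃ C > 0, SharpPSummingCond q T C) :=
  lipCohen_iff_sharp_pSumming_general x0 p q hp hpq T K hT

end
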